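/- arXiv:math/0406524 — 6 statements merged into one kernel-verified Lean document; each statement's English description precedes it below -/
import Mathlib

section
/- Let f be a continuous 2π-periodic probability density with G(x) = ∫_x^{x+π} f(y) dy. If G is not identically 1/2, then there exists an open interval on which f > 0 and G ≠ 1/2, and consequently (1/2)^{n-1} < (1/2) ∫_0^{2π} f(x)[G(x)^{n-1} + G(x-π)^{n-1}] dx for every integer n ≥ 3. -/
open MeasureTheory intervalIntegral Real Function Set

/-!
Write `H = G - 1/2`. Periodicity of `f` and `∫ f = 1` make `H` antiperiodic with antiperiod `π`,
and `H' x = f (x + π) - f x`. If `f` vanished wherever `G ≠ 1/2`, then at every point where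
`H x ≠ 0` also `H (x + π) = -H x ≠ 0`, so both `f x` and `f (x + π)` vanish and `H' x = 0`.
Hence `(H²)' = 2 H H' = 0`, so `H²` is constant; but `H` changes sign on `[x, x + π]` and
therefore has a zero, so `H ≡ 0`. The point where `f > 0` and `G ≠ 1/2` gives the interval by
openness, and the strict inequality follows from strict convexity of `t ↦ t ^ (n - 1)`,
since `G x + G (x - π) = 1`.
-/

theorem two_mul_half_add_pow_lt {a b : ℝ} {m : ℕ} (hm : 2 ≤ m) (ha : 0 ≤ a) (hb : 0 ≤ b)
    (hab : a ≠ b) : 2 * ((a + b) / 2) ^ m < a ^ m + b ^ m := by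
  have h := (strictConvexOn_pow hm).2 ha hb hab (by norm_num : (0:ℝ) < 1 / 2)
    (by norm_num : (0:ℝ) < 1 / 2) (by norm_num)
  simp only [smul_eq_mul] at h
  rw [show (a + b) / 2 = 1 / 2 * a + 1 / 2 * b by ring]
  linarith

theorem two_mul_half_add_pow_le {a b : ℝ} (m : ℕ) (ha : 0 ≤ a) (hb : 0 ≤ b) :
    2 * ((a + b) / 2) ^ m ≤ a ^ m + b ^ m := by
  have h := (convexOn_pow m).2 ha hb (by norm_num : (0:ℝ) ≤ 1 / 2)
    (by norm_num : (0:ℝ) ≤ 1 / 2) (by norm_num)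
  simp only [smul_eq_mul] at h
  rw [show (a + b) / 2 = 1 / 2 * a + 1 / 2 * b by ring]
  linarith

theorem Function.Antiperiodic.eq_zero_of_hasDerivAt {H H' : ℝ → ℝ} {c : ℝ}
    (hanti : Antiperiodic H c) (hH : ∀ x, HasDerivAt H (H' x) x)
    (hH' : ∀ x, H x ≠ 0 → H' x = 0) (x : ℝ) : H x = 0 := by
  have hsq : ∀ y, HasDerivAt (fun y => H y * H y) 0 y := fun y =>
    ((hH y).mul (hH y)).congr_deriv <| by
      rcases eq_or_ne (H y) 0 with hy | hy <;> simp [hy, hH' y]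
  have hcont : Continuous H := continuous_iff_continuousAt.2 fun y => (hH y).continuousAt
  obtain ⟨t, -, ht⟩ : ∃ t ∈ uIcc x (x + c), H t = 0 := by
    refine intermediate_value_uIcc hcont.continuousOn ?_
    rw [hanti x]
    rcases le_total (H x) 0 with h | h <;> simp [h]
  have := is_const_of_deriv_eq_zero (fun y => (hsq y).differentiableAt) (fun y => (hsq y).deriv) x t
  simpa [ht] using this

theorem exists_pos_and_ne_of_antiperiodic {f G : ℝ → ℝ} {T c : ℝ} (hf0 : ∀ x, 0 ≤ f x)
    (hG : ∀ x, HasDerivAt G (f (x + T) - f x) x) (hanti : Antiperiodic (fun x => G x - c) T)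
    (hne : ∃ x, G x ≠ c) : ∃ x, 0 < f x ∧ G x ≠ c := by
  by_contra! hcon
  have hf_zero : ∀ x, G x ≠ c → f x = 0 := fun x hx =>
    (hf0 x).eq_or_lt.elim Eq.symm fun h => absurd (hcon x h) hx
  obtain ⟨x₀, hx₀⟩ := hne
  refine hx₀ <| sub_eq_zero.1 <| hanti.eq_zero_of_hasDerivAt
    (fun x => (hG x).sub_const c) (fun x hx => ?_) x₀
  have hx' : G (x + T) ≠ c := by
    have h := hanti x
    dsimp only at h
    exact sub_ne_zero.1 (h ▸ neg_ne_zero.2 hx)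
  rw [hf_zero x (sub_ne_zero.1 hx), hf_zero _ hx', sub_zero]

section HalfPeriodIntegral

variable {f : ℝ → ℝ}

theorem hasDerivAt_integral_self_add (hf : Continuous f) (T x : ℝ) :
    HasDerivAt (fun x => ∫ y in x..x + T, f y) (f (x + T) - f x) x := by
  have hF : ∀ b, HasDerivAt (fun b => ∫ y in (0:ℝ)..b, f y) (f b) b :=
    fun b => (hf.integral_hasStrictDerivAt 0 b).hasDerivAt
  have hsub : (fun x => ∫ y in x..x + T, f y)
      = fun x => (∫ y in (0:ℝ)..x + T, f y) - ∫ y in (0:ℝ)..x, f y :=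
    funext fun y => (integral_interval_sub_left (hf.intervalIntegrable _ _)
      (hf.intervalIntegrable _ _)).symm
  rw [hsub]
  exact ((hF (x + T)).comp_add_const x T).sub (hF x)

theorem antiperiodic_integral_sub_half (hf : Continuous f) {T : ℝ} (hper : Periodic f (2 * T)) :
    Antiperiodic (fun x => (∫ y in x..x + T, f y) - (∫ y in (0:ℝ)..2 * T, f y) / 2) T := by
  intro x
  have hsplit := integral_add_adjacent_intervals (hf.intervalIntegrable (μ := volume) x (x + T))
    (hf.intervalIntegrable (x + T) (x + T + T))
  have hshift := hper.intervalIntegral_add_eq x 0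
  rw [zero_add, show x + 2 * T = x + T + T by ring] at hshift
  linarith

end HalfPeriodIntegral

theorem Function.Periodic.intervalIntegral_pos {g : ℝ → ℝ} {T : ℝ} (hT : 0 < T)
    (hg : Continuous g) (hper : Periodic g T) (hg0 : ∀ x, 0 ≤ g x) {x₀ : ℝ} (hx₀ : 0 < g x₀) :
    0 < ∫ x in (0:ℝ)..T, g x := by
  have hshift := hper.intervalIntegral_add_eq x₀ 0
  rw [zero_add] at hshift
  rw [← hshift]
  simpa using integral_lt_integral_of_continuousOn_of_le_of_exists_lt (f := 0)
    (by linarith : x₀ < x₀ + T) continuousOn_const hg.continuousOn (fun x _ => hg0 x)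
    ⟨x₀, left_mem_Icc.2 (by linarith), hx₀⟩

theorem two_mul_half_pow_lt_integral {f u v : ℝ → ℝ} {T : ℝ} {m : ℕ} (hm : 2 ≤ m) (hT : 0 < T)
    (hf : Continuous f) (hu : Continuous u) (hv : Continuous v)
    (hf_per : Periodic f T) (hu_per : Periodic u T) (hv_per : Periodic v T)
    (hf0 : ∀ x, 0 ≤ f x) (hu0 : ∀ x, 0 ≤ u x) (hv0 : ∀ x, 0 ≤ v x)
    (huv : ∀ x, u x + v x = 1) (hf1 : ∫ x in (0:ℝ)..T, f x = 1)
    {x₀ : ℝ} (hfx₀ : 0 < f x₀) (hux₀ : u x₀ ≠ v x₀) :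
    2 * (1 / 2) ^ m < ∫ x in (0:ℝ)..T, f x * (u x ^ m + v x ^ m) := by
  have hle : ∀ x, 2 * (1 / 2) ^ m ≤ u x ^ m + v x ^ m := fun x => by
    simpa only [huv x] using two_mul_half_add_pow_le m (hu0 x) (hv0 x)
  have hlt : 2 * (1 / 2) ^ m < u x₀ ^ m + v x₀ ^ m := by
    simpa only [huv x₀] using two_mul_half_add_pow_lt hm (hu0 x₀) (hv0 x₀) hux₀
  have hpos : 0 < ∫ x in (0:ℝ)..T, f x * (u x ^ m + v x ^ m - 2 * (1 / 2) ^ m) :=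
    Periodic.intervalIntegral_pos hT (by fun_prop)
      (fun x => by simp only [hf_per x, hu_per x, hv_per x])
      (fun x => mul_nonneg (hf0 x) (sub_nonneg.2 (hle x))) (mul_pos hfx₀ (sub_pos.2 hlt))
  have hint : ∫ x in (0:ℝ)..T, f x * (u x ^ m + v x ^ m - 2 * (1 / 2) ^ m)
      = (∫ x in (0:ℝ)..T, f x * (u x ^ m + v x ^ m)) - 2 * (1 / 2) ^ m := by
    simp_rw [mul_sub]
    rw [intervalIntegral.integral_sub (by apply Continuous.intervalIntegrable; fun_prop)
      (by apply Continuous.intervalIntegrable; fun_prop), intervalIntegral.integral_mul_const, hf1,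
      one_mul]
  linarith

/-- If the half-circle integral `G` of a continuous `2π`-periodic density `f` is
not identically `1/2`, then there is an open interval on which `f > 0` and
`G ≠ 1/2`, and consequently the inequality
`(1/2)^(n-1) < (1/2)∫_0^{2π} f(x)[G(x)^(n-1)+G(x-π)^(n-1)]dx`
is strict for every integer `n ≥ 3`. -/
theorem stmt7 (f : ℝ → ℝ) (hf_cont : Continuous f) (hf_nonneg : ∀ x, 0 ≤ f x)
    (hf_per : Function.Periodic f (2 * π))
    (hf_int : ∫ x in (0:ℝ)..(2 * π), f x = 1)
    (G : ℝ → ℝ) (hG : ∀ x, G x = ∫ y in x..(x + π), f y)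
    (hGnot : ¬ ∀ x, G x = 1/2) :
    (∃ a b : ℝ, a < b ∧ ∀ x ∈ Set.Ioo a b, 0 < f x ∧ G x ≠ 1/2) ∧
      ∀ n : ℕ, 3 ≤ n →
        ((1:ℝ)/2) ^ (n-1) <
          (1/2) * ∫ x in (0:ℝ)..(2 * π), f x * (G x ^ (n-1) + G (x - π) ^ (n-1)) := by
  have hG_eq : G = fun x => ∫ y in x..x + π, f y := funext hG
  have hG_deriv : ∀ x, HasDerivAt G (f (x + π) - f x) x :=
    hG_eq ▸ hasDerivAt_integral_self_add hf_cont π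
  have hG_cont : Continuous G := continuous_iff_continuousAt.2 fun x => (hG_deriv x).continuousAt
  have hG_anti : Antiperiodic (fun x => G x - 1 / 2) π := by
    simpa [hG_eq, hf_int] using antiperiodic_integral_sub_half hf_cont hf_per
  have hG_nonneg : ∀ x, 0 ≤ G x := fun x =>
    hG x ▸ integral_nonneg (by linarith [pi_pos]) fun y _ => hf_nonneg y
  have hG_compl : ∀ x, G x + G (x - π) = 1 := fun x => by
    have := hG_anti (x - π)
    simp only [sub_add_cancel] at this
    linarith
  obtain ⟨x₀, hfx₀, hGx₀⟩ := exists_pos_and_ne_of_antiperiodic hf_nonneg hG_deriv hG_anti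
    (not_forall.1 hGnot)
  refine ⟨?_, fun n hn => ?_⟩
  · have hopen : IsOpen {x | 0 < f x ∧ G x ≠ 1 / 2} :=
      (isOpen_lt continuous_const hf_cont).and (isOpen_ne_fun hG_cont continuous_const)
    obtain ⟨a, b, hab, hsub⟩ := mem_nhds_iff_exists_Ioo_subset.1 (hopen.mem_nhds ⟨hfx₀, hGx₀⟩)
    exact ⟨a, b, hab.1.trans hab.2, hsub⟩
  · have hG_per : Periodic G (2 * π) := fun x => by simpa using hG_anti.periodic_two_mul x
    have key := two_mul_half_pow_lt_integral (m := n - 1) (v := fun x => G (x - π)) (by omega)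
      two_pi_pos hf_cont hG_cont (hG_cont.comp (continuous_sub_right π)) hf_per hG_per
      (hG_per.sub_const π) hf_nonneg hG_nonneg (fun x => hG_nonneg _) hG_compl hf_int hfx₀
      (fun h => hGx₀ (by linarith [hG_compl x₀]))
    linarith
end

section
/- Let X_1, ..., X_n be i.i.d. points on the unit circle (identified with angles in [0,2π)) with continuous density f, and define G(x) = ∫_x^{x+π} f(y) dy (periodic extension). Then the probability that 0 ∈ ℝ² is not in the convex hull of the points (cos X_i, sin X_i) equals n ∫_0^{2π} f(x) G(x)^{n-1} dx. -/
/-!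
Say that `X i` starts a half-circle if every other point lies in the open half-circle
`(X i, X i + π)`. At most one point does, and when no two angles differ by a multiple of `π`
(almost surely, for an atomless law) the origin misses the convex hull exactly when some point
does: a line through the origin with all points on one side orders them by angle, and the first
one starts a half-circle. By independence `X i` starts one with probability
`∫ f(x) G(x)^(n-1) dx`, and these `n` events are disjoint.
-/

open MeasureTheory ProbabilityTheory Real intervalIntegral

theorem Function.Periodic.apply_toIcoMod {α β : Type*} [AddCommGroup α] [LinearOrder α]
    [IsOrderedAddMonoid α] [Archimedean α] {g : α → β} {p : α} (hg : Function.Periodic g p)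
    (hp : 0 < p) (a b : α) : g (toIcoMod hp a b) = g b :=
  hg.sub_zsmul_eq _

theorem zero_notMem_convexHull_iff_exists_forall_pos {E : Type*} [AddCommGroup E]
    [TopologicalSpace E] [IsTopologicalAddGroup E] [T2Space E] [Module ℝ E] [ContinuousSMul ℝ E]
    [LocallyConvexSpace ℝ E] {s : Set E} (hs : s.Finite) :
    (0 : E) ∉ convexHull ℝ s ↔ ∃ L : StrongDual ℝ E, ∀ x ∈ s, 0 < L x := by
  constructor
  · intro h
    obtain ⟨L, u, hu0, hu⟩ := geometric_hahn_banach_point_closed (convex_convexHull ℝ s)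
      (hs.isClosed_convexHull (𝕜 := ℝ)) h
    rw [map_zero] at hu0
    exact ⟨L, fun x hx => hu0.trans (hu x (subset_convexHull ℝ s hx))⟩
  · rintro ⟨L, hL⟩ h0
    have : convexHull ℝ s ⊆ {x | 0 < L x} :=
      convexHull_min hL (convex_halfSpace_gt L.isLinear 0)
    simpa using this h0

theorem zero_notMem_convexHull_range_cos_sin_iff {ι : Type*} [Finite ι] (θ : ι → ℝ) :
    (0 : ℝ × ℝ) ∉ convexHull ℝ (Set.range fun i => (cos (θ i), sin (θ i))) ↔
      ∃ φ, ∀ i, 0 < cos (θ i - φ) := by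
  rw [zero_notMem_convexHull_iff_exists_forall_pos (Set.finite_range _)]
  simp only [Set.forall_mem_range]
  constructor
  · rintro ⟨L, hL⟩
    set z : ℂ := ⟨L (1, 0), L (0, 1)⟩
    have hLz : ∀ t, L (cos t, sin t) = ‖z‖ * cos (t - Complex.arg z) := by
      intro t
      have : ((cos t, sin t) : ℝ × ℝ) = cos t • (1, 0) + sin t • (0, 1) := by ext <;> simp
      rw [cos_sub, mul_add, mul_left_comm, Complex.norm_mul_cos_arg, mul_left_comm,
        Complex.norm_mul_sin_arg, this, map_add, map_smul, map_smul, smul_eq_mul, smul_eq_mul]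
    exact ⟨Complex.arg z, fun i => pos_of_mul_pos_right (hLz _ ▸ hL i) (norm_nonneg z)⟩
  · rintro ⟨φ, hφ⟩
    refine ⟨cos φ • ContinuousLinearMap.fst ℝ ℝ ℝ + sin φ • ContinuousLinearMap.snd ℝ ℝ ℝ,
      fun i => ?_⟩
    simpa [cos_sub, mul_comm] using hφ i

section HalfCircle

variable {ι : Type*} {θ : ι → ℝ}

def IsHalfCircleStart (θ : ι → ℝ) (i : ι) : Prop := ∀ j ≠ i, 0 < sin (θ j - θ i)

theorem IsHalfCircleStart.unique {i j : ι} (hi : IsHalfCircleStart θ i)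
    (hj : IsHalfCircleStart θ j) : i = j := by
  by_contra hij
  have h := hj i hij
  rw [← neg_sub, sin_neg] at h
  linarith [hi j (Ne.symm hij)]

theorem toIcoMod_neg_pi_mem_Ico (x : ℝ) : toIcoMod two_pi_pos (-π) x ∈ Set.Ico (-π) π := by
  simpa [two_mul] using toIcoMod_mem_Ico two_pi_pos (-π) x

theorem IsHalfCircleStart.exists_forall_cos_sub_pos [Finite ι] {i : ι}
    (h : IsHalfCircleStart θ i) : ∃ φ, ∀ j, 0 < cos (θ j - φ) := by
  set δ : ι → ℝ := fun j => toIcoMod two_pi_pos (-π) (θ j - θ i)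
  have hδ_nonneg : ∀ j, 0 ≤ δ j := by
    intro j
    rcases eq_or_ne j i with rfl | hj
    · simp only [δ, sub_self]
      rw [(toIcoMod_eq_self two_pi_pos).2 ⟨by linarith [pi_pos], by linarith [pi_pos]⟩]
    · by_contra! hneg
      have := sin_nonpos_of_nonpos_of_neg_pi_le hneg.le (toIcoMod_neg_pi_mem_Ico _).1
      rw [sin_periodic.apply_toIcoMod] at this
      linarith [h j hj]
  have : Nonempty ι := ⟨i⟩
  obtain ⟨k, hk⟩ := Finite.exists_max δ
  -- bisect the arc from `θ i` to the last point `θ k`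
  refine ⟨θ i + δ k / 2, fun j => ?_⟩
  have hcos : cos (θ j - (θ i + δ k / 2)) = cos (δ j - δ k / 2) := by
    rw [show θ j - (θ i + δ k / 2) = θ j - θ i - δ k / 2 by ring]
    exact ((cos_periodic.sub_const _).apply_toIcoMod two_pi_pos (-π) _).symm
  rw [hcos]
  apply cos_pos_of_mem_Ioo
  constructor <;> linarith [hδ_nonneg j, hk j, (toIcoMod_neg_pi_mem_Ico (θ k - θ i)).2]

theorem exists_isHalfCircleStart_of_forall_cos_sub_pos [Finite ι] [Nonempty ι]
    (hθ : Pairwise fun j k => sin (θ j - θ k) ≠ 0) {φ : ℝ} (hφ : ∀ j, 0 < cos (θ j - φ)) :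
    ∃ i, IsHalfCircleStart θ i := by
  set e : ι → ℝ := fun j => toIcoMod two_pi_pos (-π) (θ j - φ)
  have he : ∀ j, e j ∈ Set.Ioo (-(π / 2)) (π / 2) := by
    intro j
    have hmem : e j ∈ Set.Ico (-π) π := toIcoMod_neg_pi_mem_Ico _
    have hcos : 0 < cos (e j) := by rw [cos_periodic.apply_toIcoMod]; exact hφ j
    constructor <;> by_contra! h
    · rw [← cos_neg] at hcos
      linarith [cos_nonpos_of_pi_div_two_le_of_le (x := -e j) (by linarith)
        (by linarith [hmem.1, pi_pos])]
    · linarith [cos_nonpos_of_pi_div_two_le_of_le h (by linarith [hmem.2, pi_pos])]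
  -- the first point counterclockwise from `φ - π / 2` starts the half-circle
  obtain ⟨i, hi⟩ := Finite.exists_min e
  refine ⟨i, fun j hji => lt_of_le_of_ne ?_ (hθ hji).symm⟩
  have hsin : sin (θ j - θ i) = sin (e j - e i) := by
    rw [show θ j - θ i = (θ j - φ) - (θ i - φ) by ring]
    simp only [e, sin_sub, sin_periodic.apply_toIcoMod, cos_periodic.apply_toIcoMod]
  rw [hsin]
  exact sin_nonneg_of_nonneg_of_le_pi (sub_nonneg.2 (hi j)) (by linarith [(he i).1, (he j).2])

theorem zero_notMem_convexHull_range_cos_sin_iff_exists_isHalfCircleStart [Finite ι]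
    [Nonempty ι] (hθ : Pairwise fun j k => sin (θ j - θ k) ≠ 0) :
    (0 : ℝ × ℝ) ∉ convexHull ℝ (Set.range fun i => (cos (θ i), sin (θ i))) ↔
      ∃ i, IsHalfCircleStart θ i := by
  rw [zero_notMem_convexHull_range_cos_sin_iff]
  exact ⟨fun ⟨_, hφ⟩ => exists_isHalfCircleStart_of_forall_cos_sub_pos hθ hφ,
    fun ⟨_, hi⟩ => hi.exists_forall_cos_sub_pos⟩

end HalfCircle

theorem ProbabilityTheory.IndepFun.ae_sub_notMem {Ω : Type*} [MeasurableSpace Ω] {μ : Measure Ω}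
    [IsFiniteMeasure μ] {Y Z : Ω → ℝ} (hY : Measurable Y) (hZ : Measurable Z)
    (hYZ : IndepFun Y Z μ) [NullSingletonClass (μ.map Z)] {C : Set ℝ} (hC : C.Countable) :
    ∀ᵐ ω ∂μ, Y ω - Z ω ∉ C := by
  have hS : MeasurableSet {p : ℝ × ℝ | p.1 - p.2 ∈ C} :=
    (measurable_fst.sub measurable_snd) hC.measurableSet
  rw [ae_iff]
  simp only [not_not]
  change μ ((fun ω => (Y ω, Z ω)) ⁻¹' {p | p.1 - p.2 ∈ C}) = 0
  rw [← Measure.map_apply (hY.prodMk hZ) hS,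
    (indepFun_iff_map_prod_eq_prod_map_map hY.aemeasurable hZ.aemeasurable).1 hYZ,
    Measure.prod_apply hS]
  have h0 (x : ℝ) : μ.map Z (Prod.mk x ⁻¹' {p | p.1 - p.2 ∈ C}) = 0 :=
    (hC.preimage sub_right_injective).measure_zero _
  simp only [h0, lintegral_zero]

theorem MeasureTheory.Measure.pi_setOf_forall_ne_mem {α : Type*} [MeasurableSpace α] (ν : Measure α)
    [SigmaFinite ν] {m : ℕ} (i : Fin (m + 1)) {s : Set (α × α)} (hs : MeasurableSet s) :
    Measure.pi (fun _ : Fin (m + 1) => ν) {x | ∀ j ≠ i, (x i, x j) ∈ s} =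
      ∫⁻ a, ν (Prod.mk a ⁻¹' s) ^ m ∂ν := by
  set e := MeasurableEquiv.piFinSuccAbove (fun _ : Fin (m + 1) => α) i
  have hs' : MeasurableSet {p : α × (Fin m → α) | ∀ j, (p.1, p.2 j) ∈ s} := by
    rw [Set.ofPred_forall]
    exact .iInter fun j => (measurable_fst.prodMk ((measurable_pi_apply j).comp measurable_snd)) hs
  have hpre : {x : Fin (m + 1) → α | ∀ j ≠ i, (x i, x j) ∈ s} =
      e ⁻¹' {p | ∀ j, (p.1, p.2 j) ∈ s} := by
    ext x
    simp only [Set.mem_preimage, Set.mem_ofPred_eq, e, MeasurableEquiv.piFinSuccAbove_apply,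
      Fin.insertNthEquiv_symm_apply]
    exact ⟨fun h j => h _ (Fin.succAbove_ne i j),
      fun h j hj => by obtain ⟨k, rfl⟩ := Fin.exists_succAbove_eq hj; exact h k⟩
  rw [hpre, (measurePreserving_piFinSuccAbove (fun _ => ν) i).measure_preimage
    hs'.nullMeasurableSet, Measure.prod_apply hs']
  congr 1 with a
  have : Prod.mk a ⁻¹' {p : α × (Fin m → α) | ∀ j, (p.1, p.2 j) ∈ s} =
      Set.univ.pi fun _ => Prod.mk a ⁻¹' s := by
    ext; simp
  rw [this, Measure.pi_pi, Finset.prod_const, Finset.card_univ, Fintype.card_fin]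

theorem measurableSet_setOf_forall_ne_mem {ι α : Type*} [Countable ι] [MeasurableSpace α]
    (i : ι) {s : Set (α × α)} (hs : MeasurableSet s) :
    MeasurableSet {x : ι → α | ∀ j ≠ i, (x i, x j) ∈ s} :=
  measurableSet_setOfPred.2 <| Measurable.forall fun j => measurable_const.imp <|
    measurableSet_setOfPred.1 ((measurable_pi_apply i).prodMk (measurable_pi_apply j) hs)

section IID

variable {Ω ι : Type*} [MeasurableSpace Ω] {μ : Measure Ω} [IsProbabilityMeasure μ]

theorem ae_pairwise_sin_sub_ne_zero [Countable ι] {X : ι → Ω → ℝ}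
    (hmeas : ∀ i, Measurable (X i)) (hindep : iIndepFun X μ) {ν : Measure ℝ}
    [NullSingletonClass ν] (hlaw : ∀ i, μ.map (X i) = ν) :
    ∀ᵐ ω ∂μ, Pairwise fun j k => sin (X j ω - X k ω) ≠ 0 := by
  refine ae_all_iff.2 fun j => ae_all_iff.2 fun k => ?_
  rcases eq_or_ne j k with rfl | hjk
  · exact ae_of_all _ fun _ h => absurd rfl h
  have : NullSingletonClass (μ.map (X k)) := by rw [hlaw k]; infer_instance
  filter_upwards [(hindep.indepFun hjk).ae_sub_notMem (hmeas j) (hmeas k)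
    (Set.countable_range fun n : ℤ => n * π)] with ω hω _
  rwa [Ne, sin_eq_zero_iff, ← Set.mem_range]

theorem measure_zero_notMem_convexHull_eq_lintegral {m : ℕ} {X : Fin (m + 1) → Ω → ℝ}
    (hmeas : ∀ i, Measurable (X i)) (hindep : iIndepFun X μ) {ν : Measure ℝ}
    [NullSingletonClass ν] (hlaw : ∀ i, μ.map (X i) = ν) :
    μ {ω | (0 : ℝ × ℝ) ∉ convexHull ℝ (Set.range fun i => (cos (X i ω), sin (X i ω)))} =
      (m + 1) * ∫⁻ x, ν {y | 0 < sin (y - x)} ^ m ∂ν := by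
  have : IsProbabilityMeasure ν :=
    hlaw 0 ▸ Measure.isProbabilityMeasure_map (hmeas 0).aemeasurable
  set T : Ω → Fin (m + 1) → ℝ := fun ω i => X i ω
  have hT : Measurable T := measurable_pi_lambda _ hmeas
  have hlawT : μ.map T = Measure.pi fun _ => ν := by
    rw [hindep.map_fun_eq_pi_map fun i => (hmeas i).aemeasurable]
    simp only [hlaw]
  set S : Set (ℝ × ℝ) := {p | 0 < sin (p.2 - p.1)}
  have hS : MeasurableSet S := measurableSet_lt measurable_const (by fun_prop)
  -- `A i` is `{ω | IsHalfCircleStart (X · ω) i}`, written as a preimage under `T`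
  set A : Fin (m + 1) → Set Ω := fun i => T ⁻¹' {θ | ∀ j ≠ i, (θ i, θ j) ∈ S}
  have hA_meas (i : Fin (m + 1)) : MeasurableSet (A i) :=
    hT (measurableSet_setOf_forall_ne_mem i hS)
  have hA (i : Fin (m + 1)) : μ (A i) = ∫⁻ x, ν {y | 0 < sin (y - x)} ^ m ∂ν := by
    rw [← Measure.map_apply hT (measurableSet_setOf_forall_ne_mem i hS), hlawT,
      Measure.pi_setOf_forall_ne_mem ν i hS]
    rfl
  have hA_disj : Pairwise (Function.onFun Disjoint A) := fun i j hij =>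
    Set.disjoint_left.2 fun _ hi hj => hij (IsHalfCircleStart.unique hi hj)
  have hae : {ω | (0 : ℝ × ℝ) ∉ convexHull ℝ (Set.range fun i => (cos (X i ω), sin (X i ω)))}
      =ᵐ[μ] ⋃ i, A i := by
    refine Filter.eventuallyEq_set.2 ?_
    filter_upwards [ae_pairwise_sin_sub_ne_zero hmeas hindep hlaw] with ω hω
    rw [Set.mem_iUnion]
    exact zero_notMem_convexHull_range_cos_sin_iff_exists_isHalfCircleStart hω
  rw [measure_congr hae, measure_iUnion hA_disj hA_meas, tsum_fintype, Finset.sum_congr rfl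
    fun i _ => hA i, Finset.sum_const, Finset.card_univ, Fintype.card_fin, nsmul_eq_mul]
  push_cast
  rfl

end IID

theorem lintegral_Ico_ofReal_eq {g : ℝ → ℝ} {a b : ℝ} (hab : a ≤ b)
    (hg : IntervalIntegrable g volume a b) (hg_nonneg : ∀ x, 0 ≤ g x) :
    ∫⁻ x in Set.Ico a b, ENNReal.ofReal (g x) = ENNReal.ofReal (∫ x in a..b, g x) := by
  rw [integral_of_le hab, ofReal_integral_eq_lintegral_ofReal hg.1 (ae_of_all _ hg_nonneg),
    restrict_Ico_eq_restrict_Ioc]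

section Density

variable {f : ℝ → ℝ}

theorem integral_indicator_setOf_sin_sub_pos (hf_cont : Continuous f)
    (hf_per : Function.Periodic f (2 * π)) (x : ℝ) :
    ∫ y in 0..2 * π, {y | 0 < sin (y - x)}.indicator f y = ∫ y in x..x + π, f y := by
  set S : Set ℝ := {y | 0 < sin (y - x)}
  have hS : MeasurableSet S := measurableSet_lt measurable_const (by fun_prop)
  have hint (a b : ℝ) : IntervalIntegrable (S.indicator f) volume a b :=
    ⟨(hf_cont.intervalIntegrable a b).1.indicator hS,
      (hf_cont.intervalIntegrable a b).2.indicator hS⟩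
  have hper : Function.Periodic (S.indicator f) (2 * π) := by
    intro y
    simp only [Set.indicator, S, Set.mem_ofPred_eq, add_sub_right_comm, sin_add_two_pi,
      hf_per y]
  have h_upper : ∫ y in x..x + π, S.indicator f y = ∫ y in x..x + π, f y :=
    integral_congr_Ioo_of_le (by linarith [pi_pos]) fun y hy =>
      Set.indicator_of_mem (s := S)
        (sin_pos_of_pos_of_lt_pi (by linarith [hy.1]) (by linarith [hy.2]) : y ∈ S) f
  have h_lower : ∫ y in x + π..x + 2 * π, S.indicator f y = 0 := by
    rw [← integral_zero (a := x + π) (b := x + 2 * π) (μ := volume) (E := ℝ)]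
    refine integral_congr_Ioo_of_le (by linarith [pi_pos]) fun y hy =>
      Set.indicator_of_notMem ?_ f
    rw [Set.mem_ofPred_eq, not_lt, ← sin_sub_two_pi]
    exact sin_nonpos_of_nonpos_of_neg_pi_le (by linarith [hy.2]) (by linarith [hy.1])
  rw [← zero_add (2 * π), hper.intervalIntegral_add_eq 0 x,
    ← integral_add_adjacent_intervals (hint x (x + π)) (hint _ _), h_upper, h_lower, add_zero]

theorem withDensity_apply_setOf_sin_sub_pos (hf_cont : Continuous f) (hf_nonneg : ∀ x, 0 ≤ f x)
    (hf_per : Function.Periodic f (2 * π)) (x : ℝ) :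
    (volume.restrict (Set.Ico 0 (2 * π))).withDensity (fun y => ENNReal.ofReal (f y))
      {y | 0 < sin (y - x)} = ENNReal.ofReal (∫ y in x..x + π, f y) := by
  set S : Set ℝ := {y | 0 < sin (y - x)}
  have hS : MeasurableSet S := measurableSet_lt measurable_const (by fun_prop)
  rw [withDensity_apply _ hS, ← lintegral_indicator hS,
    show S.indicator (fun y => ENNReal.ofReal (f y)) = fun y => ENNReal.ofReal (S.indicator f y)
      from Set.indicator_comp_of_zero ENNReal.ofReal_zero,
    lintegral_Ico_ofReal_eq two_pi_pos.le
      ⟨(hf_cont.intervalIntegrable _ _).1.indicator hS,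
        (hf_cont.intervalIntegrable _ _).2.indicator hS⟩
      (Set.indicator_nonneg fun y _ => hf_nonneg y),
    integral_indicator_setOf_sin_sub_pos hf_cont hf_per]

theorem Continuous.intervalIntegral_add_right (hf_cont : Continuous f) (c : ℝ) :
    Continuous fun x => ∫ y in x..x + c, f y := by
  have h (x : ℝ) : ∫ y in x..x + c, f y = ∫ t in 0..c, f (x + t) := by
    rw [integral_comp_add_left f x, add_zero]
  simp_rw [h]
  fun_prop

theorem lintegral_withDensity_setOf_sin_sub_pos_pow (hf_cont : Continuous f)
    (hf_nonneg : ∀ x, 0 ≤ f x) (hf_per : Function.Periodic f (2 * π)) (m : ℕ) :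
    ∫⁻ x, ((volume.restrict (Set.Ico 0 (2 * π))).withDensity fun y => ENNReal.ofReal (f y))
        {y | 0 < sin (y - x)} ^ m
      ∂(volume.restrict (Set.Ico 0 (2 * π))).withDensity (fun y => ENNReal.ofReal (f y)) =
      ENNReal.ofReal (∫ x in 0..2 * π, f x * (∫ y in x..x + π, f y) ^ m) := by
  have hG_nonneg (x : ℝ) : 0 ≤ ∫ y in x..x + π, f y :=
    integral_nonneg (by linarith [pi_pos]) fun y _ => hf_nonneg y
  have hG_cont := hf_cont.intervalIntegral_add_right π
  simp_rw [withDensity_apply_setOf_sin_sub_pos hf_cont hf_nonneg hf_per]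
  rw [lintegral_withDensity_eq_lintegral_mul _ (by fun_prop)
    (hG_cont.measurable.ennreal_ofReal.pow_const m)]
  simp_rw [Pi.mul_apply, ← ENNReal.ofReal_pow (hG_nonneg _), ← ENNReal.ofReal_mul (hf_nonneg _)]
  exact lintegral_Ico_ofReal_eq two_pi_pos.le
    ((hf_cont.mul (hG_cont.pow m)).intervalIntegrable _ _)
    fun x => mul_nonneg (hf_nonneg x) (pow_nonneg (hG_nonneg x) m)

end Density

theorem stmt9_general {Ω : Type*} [MeasurableSpace Ω] (μ : Measure Ω) [IsProbabilityMeasure μ]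
    (n : ℕ) (hn : 2 ≤ n)
    (f : ℝ → ℝ) (hf_cont : Continuous f) (hf_nonneg : ∀ x, 0 ≤ f x)
    (hf_per : Function.Periodic f (2 * π))
    (G : ℝ → ℝ) (hG : ∀ x, G x = ∫ y in x..(x + π), f y)
    (X : Fin n → Ω → ℝ) (hmeas : ∀ i, Measurable (X i))
    (hindep : iIndepFun X μ)
    (hlaw : ∀ i, Measure.map (X i) μ =
      (volume.restrict (Set.Ico (0:ℝ) (2 * π))).withDensity fun x => ENNReal.ofReal (f x)) :
    μ {ω | (0:ℝ × ℝ) ∉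
        convexHull ℝ (Set.range fun i => (Real.cos (X i ω), Real.sin (X i ω)))} =
      ENNReal.ofReal (n * ∫ x in (0:ℝ)..(2 * π), f x * G x ^ (n-1)) := by
  obtain ⟨m, rfl⟩ : ∃ m, n = m + 1 := ⟨n - 1, by omega⟩
  obtain rfl : G = fun x => ∫ y in x..x + π, f y := funext hG
  rw [measure_zero_notMem_convexHull_eq_lintegral hmeas hindep hlaw,
    lintegral_withDensity_setOf_sin_sub_pos_pow hf_cont hf_nonneg hf_per, Nat.add_sub_cancel,
    ENNReal.ofReal_mul (Nat.cast_nonneg _), ENNReal.ofReal_natCast]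
  push_cast
  rfl

/-- Let `X 1, ..., X n` be i.i.d. angles on the circle with continuous `2π`-periodic
density `f`, and `G x = ∫_x^{x+π} f`.  Then the probability that the origin of `ℝ²`
is *not* in the convex hull of the points `(cos (X i), sin (X i))` equals
`n ∫_0^{2π} f(x) G(x)^(n-1) dx`. -/
theorem stmt9 {Ω : Type*} [MeasurableSpace Ω] (μ : Measure Ω) [IsProbabilityMeasure μ]
    (n : ℕ) (hn : 2 ≤ n)
    (f : ℝ → ℝ) (hf_cont : Continuous f) (hf_nonneg : ∀ x, 0 ≤ f x)
    (hf_per : Function.Periodic f (2 * π))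
    (hf_int : ∫ x in (0:ℝ)..(2 * π), f x = 1)
    (G : ℝ → ℝ) (hG : ∀ x, G x = ∫ y in x..(x + π), f y)
    (X : Fin n → Ω → ℝ) (hmeas : ∀ i, Measurable (X i))
    (hindep : iIndepFun X μ)
    (hlaw : ∀ i, Measure.map (X i) μ =
      (volume.restrict (Set.Ico (0:ℝ) (2 * π))).withDensity fun x => ENNReal.ofReal (f x)) :
    μ {ω | (0:ℝ × ℝ) ∉
        convexHull ℝ (Set.range fun i => (Real.cos (X i ω), Real.sin (X i ω)))} =
      ENNReal.ofReal (n * ∫ x in (0:ℝ)..(2 * π), f x * G x ^ (n-1)) :=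
  stmt9_general μ n hn f hf_cont hf_nonneg hf_per G hG X hmeas hindep hlaw
end

section
/- If X_1, ..., X_n are i.i.d. uniform on the unit circle in ℝ² with n ≥ 2, then P(0 ∈ conv{X_1, ..., X_n}) = 1 - n·(1/2)^{n-1}. -/
open MeasureTheory ProbabilityTheory Real

/-!
Write `X_j = (cos θ_j, sin θ_j)`. By separation, `0 ∉ conv{X_j}` iff all points lie in an open
half-plane through `0`, and up to a null set this happens iff some point `X_i` sees
all the others within the open half-circle counterclockwise from it. These `n` events are
disjoint, and by independence each has probability `(1/2)^(n-1)`, since each other point lies in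
the half-circle with probability `1/2` whatever `θ_i` is. To avoid handling the null set, the
complement is squeezed between the union of these events and the union of their closed-half-circle
versions, which have the same probabilities.
-/

open Set Filter Topology

section Separation

variable {E : Type*} [TopologicalSpace E] [AddCommGroup E] [Module ℝ E]
  [IsTopologicalAddGroup E] [ContinuousSMul ℝ E] [LocallyConvexSpace ℝ E] [T2Space E]

theorem zero_notMem_convexHull_iff {s : Set E} (hs : s.Finite) :
    (0 : E) ∉ convexHull ℝ s ↔ ∃ f : StrongDual ℝ E, ∀ x ∈ s, 0 < f x := by
  constructor
  · intro h
    obtain ⟨f, u, hf0, hu⟩ :=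
      geometric_hahn_banach_point_closed (convex_convexHull ℝ s) (hs.isClosed_convexHull ℝ) h
    rw [map_zero] at hf0
    exact ⟨f, fun x hx => hf0.trans (hu x (subset_convexHull ℝ s hx))⟩
  · rintro ⟨f, hf⟩ h0
    have : 0 < f 0 := convexHull_min hf (convex_halfSpace_gt f.toLinearMap.isLinear 0) h0
    simp at this

theorem isClosed_setOf_zero_mem_convexHull_range {ι : Type*} [Finite ι] :
    IsClosed {y : ι → E | (0 : E) ∈ convexHull ℝ (range y)} := by
  have : {y : ι → E | (0 : E) ∈ convexHull ℝ (range y)}ᶜ =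
      ⋃ f : StrongDual ℝ E, ⋂ i, {y | 0 < f (y i)} := by
    ext y
    simp [zero_notMem_convexHull_iff (finite_range y)]
  rw [← isOpen_compl_iff, this]
  exact isOpen_iUnion fun f => isOpen_iInter_of_finite fun i =>
    isOpen_lt continuous_const (f.continuous.comp (continuous_apply i))

end Separation

theorem measure_pi_setOf_forall_ne_mem {α : Type*} [MeasurableSpace α] (ν : Measure α)
    [IsProbabilityMeasure ν] {m : ℕ} (i : Fin (m + 1)) {R : Set (α × α)} (hR : MeasurableSet R)
    {c : ENNReal} (hc : ∀ t, ν (Prod.mk t ⁻¹' R) = c) :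
    Measure.pi (fun _ => ν) {x : Fin (m + 1) → α | ∀ j ≠ i, (x i, x j) ∈ R} = c ^ m := by
  set S := {p : α × (Fin m → α) | ∀ k, (p.1, p.2 k) ∈ R}
  have hS : MeasurableSet S := by
    simp only [S, ofPred_forall]
    exact MeasurableSet.iInter fun k =>
      hR.preimage (measurable_fst.prodMk ((measurable_pi_apply k).comp measurable_snd))
  have hpre : {x : Fin (m + 1) → α | ∀ j ≠ i, (x i, x j) ∈ R} =
      MeasurableEquiv.piFinSuccAbove (fun _ => α) i ⁻¹' S := by
    ext x
    simp [S, i.forall_iff_succAbove, Fin.succAbove_ne, Fin.removeNth]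
  have hslice : ∀ t, Prod.mk t ⁻¹' S = univ.pi fun _ => Prod.mk t ⁻¹' R := by
    intro t; ext y; simp [S]
  rw [hpre, (measurePreserving_piFinSuccAbove (fun _ => ν) i).measure_preimage
    hS.nullMeasurableSet, Measure.prod_apply hS]
  simp [hslice, Measure.pi_pi, hc]

theorem measure_setOf_sin_sub_nonneg (ν : Measure ℝ) [IsProbabilityMeasure ν]
    (hν : ∀ t, ν {u | 0 < sin (u - t)} = 2⁻¹) (t : ℝ) : ν {u | 0 ≤ sin (u - t)} = 2⁻¹ := by
  have : {u | 0 ≤ sin (u - t)} = {u | 0 < sin (u - (t + π))}ᶜ := by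
    ext u
    simp [← sub_sub, sin_sub_pi]
  rw [this, prob_compl_eq_one_sub (measurableSet_lt measurable_const (by fun_prop)), hν,
    ENNReal.one_sub_inv_two]

theorem cond_Ico_setOf_sin_sub_pos (t : ℝ) :
    volume[|Ico 0 (2 * π)] {u | 0 < sin (u - t)} = 2⁻¹ := by
  set A := {u : ℝ | 0 < sin (u - t)}
  have hA : MeasurableSet A := measurableSet_lt measurable_const (by fun_prop)
  have hper : ∀ g : AddSubgroup.zmultiples (2 * π), (fun u => g +ᵥ u) ⁻¹' A = A := by
    rintro ⟨_, k, rfl⟩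
    ext u
    change 0 < sin (k • (2 * π) + u - t) ↔ 0 < sin (u - t)
    rw [zsmul_eq_mul, add_sub_assoc, add_comm, sin_add_int_mul_two_pi]
  have hhalf : A ∩ Ioc t (t + 2 * π) = Ioo t (t + π) := by
    ext u
    simp only [A, mem_inter_iff, mem_ofPred_eq, mem_Ioc, mem_Ioo]
    constructor
    · rintro ⟨hs, htu, hu⟩
      refine ⟨htu, lt_of_not_ge fun hπ => hs.not_ge ?_⟩
      have := sin_nonneg_of_nonneg_of_le_pi (x := u - t - π) (by linarith) (by linarith)
      rwa [sin_sub_pi, neg_nonneg] at this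
    · rintro ⟨htu, hu⟩
      exact ⟨sin_pos_of_pos_of_lt_pi (by linarith) (by linarith), htu, by linarith [pi_pos]⟩
  -- `A` is `2π`-periodic, so its mass in a period does not depend on which period is taken
  have hshift := (isAddFundamentalDomain_Ioc two_pi_pos 0).measure_set_eq
    (isAddFundamentalDomain_Ioc two_pi_pos t) hA hper
  rw [zero_add] at hshift
  rw [cond_apply measurableSet_Ico, Real.volume_Ico, inter_comm,
    measure_congr ((ae_eq_refl A).inter Ico_ae_eq_Ioc), hshift, hhalf, Real.volume_Ioo,
    sub_zero, add_sub_cancel_left, ENNReal.ofReal_mul zero_le_two, ENNReal.ofReal_ofNat,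
    ENNReal.mul_inv (by simp) (by simp), mul_assoc,
    ENNReal.inv_mul_cancel (by simp [pi_pos]) ENNReal.ofReal_ne_top, mul_one]

theorem zero_notMem_convexHull_of_sin_sub_pos {ι : Type*} [Finite ι] (θ : ι → ℝ) (i : ι)
    (h : ∀ j ≠ i, 0 < sin (θ j - θ i)) :
    (0 : ℝ × ℝ) ∉ convexHull ℝ (range fun j => (cos (θ j), sin (θ j))) := by
  -- the `i`-th point lies on the boundary of the half-plane `{sin (· - θ i) > 0}`; rotating it
  -- clockwise by a small `δ` keeps the other points inside and brings the `i`-th one in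
  obtain ⟨δ, hδj, hδ⟩ : ∃ δ, (∀ j ≠ i, 0 < sin (θ j - θ i + δ)) ∧ δ ∈ Ioo 0 π := by
    refine ((eventually_all.2 fun j => ?_).and (Ioo_mem_nhdsGT pi_pos)).exists
    rcases eq_or_ne j i with rfl | hj
    · exact Eventually.of_forall fun _ hj => absurd rfl hj
    have hcont : Continuous fun δ => sin (θ j - θ i + δ) := by fun_prop
    have hlim : Tendsto (fun δ => sin (θ j - θ i + δ)) (𝓝[>] 0) (𝓝 (sin (θ j - θ i))) := by
      simpa using (hcont.tendsto 0).mono_left nhdsWithin_le_nhds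
    exact (hlim.eventually_const_lt (h j hj)).mono fun _ hδ _ => hδ
  rw [zero_notMem_convexHull_iff (finite_range _)]
  refine ⟨-sin (θ i - δ) • ContinuousLinearMap.fst ℝ ℝ ℝ +
    cos (θ i - δ) • ContinuousLinearMap.snd ℝ ℝ ℝ, ?_⟩
  rintro _ ⟨j, rfl⟩
  have hval : -sin (θ i - δ) * cos (θ j) + cos (θ i - δ) * sin (θ j) = sin (θ j - θ i + δ) := by
    rw [show θ j - θ i + δ = θ j - (θ i - δ) by ring, sin_sub (θ j)]
    ring
  simp only [add_apply, smul_apply,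
    ContinuousLinearMap.coe_fst', ContinuousLinearMap.coe_snd', smul_eq_mul, hval]
  rcases eq_or_ne j i with rfl | hj
  · simpa using sin_pos_of_pos_of_lt_pi hδ.1 hδ.2
  · exact hδj j hj

theorem exists_forall_sin_sub_nonneg_of_zero_notMem_convexHull {ι : Type*} [Finite ι]
    [Nonempty ι] (θ : ι → ℝ)
    (h : (0 : ℝ × ℝ) ∉ convexHull ℝ (range fun j => (cos (θ j), sin (θ j)))) :
    ∃ i, ∀ j, 0 ≤ sin (θ j - θ i) := by
  obtain ⟨f, hf⟩ := (zero_notMem_convexHull_iff (finite_range _)).1 h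
  -- on the circle `f` is `‖z‖ cos (· - arg z)`, so every angle lies within `π / 2` of `arg z`
  set z : ℂ := ⟨f (1, 0), f (0, 1)⟩
  have hcos : ∀ j, 0 < Real.Angle.cos ((θ j - z.arg : ℝ) : Real.Angle) := by
    intro j
    have hfj : f (cos (θ j), sin (θ j)) = ‖z‖ * cos (θ j - z.arg) := by
      have hcoord : ((cos (θ j), sin (θ j)) : ℝ × ℝ) = cos (θ j) • (1, 0) + sin (θ j) • (0, 1) := by
        ext <;> simp
      have hre : ‖z‖ * cos z.arg = f (1, 0) := Complex.norm_mul_cos_arg z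
      have him : ‖z‖ * sin z.arg = f (0, 1) := Complex.norm_mul_sin_arg z
      rw [hcoord, map_add, map_smul, map_smul, smul_eq_mul, smul_eq_mul, cos_sub]
      linear_combination (-cos (θ j)) * hre - sin (θ j) * him
    rw [Real.Angle.cos_coe]
    exact pos_of_mul_pos_right (hfj ▸ hf _ ⟨j, rfl⟩) (norm_nonneg z)
  set ψ : ι → ℝ := fun j => ((θ j - z.arg : ℝ) : Real.Angle).toReal
  have hψ : ∀ j, |ψ j| < π / 2 := fun j =>
    Real.Angle.cos_pos_iff_abs_toReal_lt_pi_div_two.1 (hcos j)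
  obtain ⟨i, hi⟩ := Finite.exists_min ψ
  refine ⟨i, fun j => ?_⟩
  have hsin : sin (θ j - θ i) = sin (ψ j - ψ i) := by
    rw [← Real.Angle.sin_coe, ← Real.Angle.sin_coe, Real.Angle.coe_sub (ψ j),
      Real.Angle.coe_toReal, Real.Angle.coe_toReal, ← Real.Angle.coe_sub]
    congr 2
    ring
  rw [hsin]
  exact sin_nonneg_of_nonneg_of_le_pi (sub_nonneg.2 (hi j))
    (by linarith [(abs_lt.1 (hψ i)).1, (abs_lt.1 (hψ j)).2])

theorem measure_pi_zero_notMem_convexHull (ν : Measure ℝ) [IsProbabilityMeasure ν]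
    (hν : ∀ t, ν {u | 0 < sin (u - t)} = 2⁻¹) (m : ℕ) :
    Measure.pi (fun _ : Fin (m + 1) => ν)
      {θ | (0 : ℝ × ℝ) ∉ convexHull ℝ (range fun j => (cos (θ j), sin (θ j)))} =
      (m + 1) * 2⁻¹ ^ m := by
  set P := Measure.pi fun _ : Fin (m + 1) => ν
  set R := {p : ℝ × ℝ | 0 < sin (p.2 - p.1)}
  set R' := {p : ℝ × ℝ | 0 ≤ sin (p.2 - p.1)}
  set B := fun i : Fin (m + 1) => {θ : Fin (m + 1) → ℝ | ∀ j ≠ i, (θ i, θ j) ∈ R}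
  set B' := fun i : Fin (m + 1) => {θ : Fin (m + 1) → ℝ | ∀ j ≠ i, (θ i, θ j) ∈ R'}
  have hR : MeasurableSet R := measurableSet_lt measurable_const (by fun_prop)
  have hR' : MeasurableSet R' := measurableSet_le measurable_const (by fun_prop)
  have hB : ∀ i, P (B i) = 2⁻¹ ^ m := fun i => measure_pi_setOf_forall_ne_mem ν i hR hν
  have hB' : ∀ i, P (B' i) = 2⁻¹ ^ m := fun i =>
    measure_pi_setOf_forall_ne_mem ν i hR' (measure_setOf_sin_sub_nonneg ν hν)
  have hB_meas : ∀ i, MeasurableSet (B i) := by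
    intro i
    simp only [B, ofPred_forall]
    exact .iInter fun j => .iInter fun _ => hR.preimage (by fun_prop)
  have hB_disj : Pairwise (Function.onFun Disjoint B) := by
    refine fun i k hik => disjoint_left.2 fun θ hi hk => ?_
    have h1 : 0 < sin (θ k - θ i) := hi k hik.symm
    have h2 : 0 < sin (θ i - θ k) := hk i hik
    rw [← neg_sub, sin_neg] at h2
    linarith
  refine le_antisymm ?_ ?_
  · calc P _ ≤ P (⋃ i, B' i) := measure_mono fun θ hθ => by
          obtain ⟨i, hi⟩ := exists_forall_sin_sub_nonneg_of_zero_notMem_convexHull θ hθ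
          exact mem_iUnion.2 ⟨i, fun j _ => hi j⟩
      _ ≤ ∑ i, P (B' i) := measure_iUnion_fintype_le P B'
      _ = (m + 1) * 2⁻¹ ^ m := by simp [hB']
  · calc (m + 1) * 2⁻¹ ^ m = ∑ i, P (B i) := by simp [hB]
      _ = P (⋃ i, B i) := by rw [measure_iUnion hB_disj hB_meas, tsum_fintype]
      _ ≤ P _ := measure_mono <| iUnion_subset fun i θ hθ =>
          zero_notMem_convexHull_of_sin_sub_pos θ i hθ

theorem measure_pi_zero_mem_convexHull (ν : Measure ℝ) [IsProbabilityMeasure ν]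
    (hν : ∀ t, ν {u | 0 < sin (u - t)} = 2⁻¹) (m : ℕ) :
    Measure.pi (fun _ : Fin (m + 1) => ν)
      {θ | (0 : ℝ × ℝ) ∈ convexHull ℝ (range fun j => (cos (θ j), sin (θ j)))} =
      1 - (m + 1) * 2⁻¹ ^ m := by
  have hcircle : Measurable fun (θ : Fin (m + 1) → ℝ) j => (cos (θ j), sin (θ j)) := by fun_prop
  have hG := isClosed_setOf_zero_mem_convexHull_range.measurableSet.preimage hcircle
  have := prob_compl_eq_one_sub (μ := Measure.pi fun _ : Fin (m + 1) => ν) hG.compl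
  rw [compl_compl] at this
  rwa [← measure_pi_zero_notMem_convexHull ν hν m]

/-- If `X 1, ..., X n` are i.i.d. uniform on the unit circle in `ℝ²` (the law being
the image of the normalized Lebesgue measure on `[0,2π)` under `θ ↦ (cos θ, sin θ)`),
with `n ≥ 2`, then `P(0 ∈ conv{X 1, ..., X n}) = 1 - n·(1/2)^(n-1)`. -/
theorem stmt10 {Ω : Type*} [MeasurableSpace Ω] (μ : Measure Ω) [IsProbabilityMeasure μ]
    (n : ℕ) (hn : 2 ≤ n)
    (X : Fin n → Ω → ℝ × ℝ) (hmeas : ∀ i, Measurable (X i))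
    (hindep : iIndepFun X μ)
    (hlaw : ∀ i, Measure.map (X i) μ =
      Measure.map (fun θ : ℝ => (Real.cos θ, Real.sin θ))
        ((ENNReal.ofReal (2 * π))⁻¹ • volume.restrict (Set.Ico (0:ℝ) (2 * π)))) :
    μ {ω | (0:ℝ × ℝ) ∈ convexHull ℝ (Set.range fun i => X i ω)} =
      ENNReal.ofReal (1 - n * ((1:ℝ)/2) ^ (n-1)) := by
  obtain ⟨m, rfl⟩ : ∃ m, n = m + 1 := ⟨n - 1, by omega⟩
  set ν := volume[|Ico (0 : ℝ) (2 * π)]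
  have : IsProbabilityMeasure ν :=
    cond_isProbabilityMeasure_of_finite (by simp [pi_pos]) measure_Ico_lt_top.ne
  have hG : MeasurableSet {y : Fin (m + 1) → ℝ × ℝ | (0 : ℝ × ℝ) ∈ convexHull ℝ (range y)} :=
    isClosed_setOf_zero_mem_convexHull_range.measurableSet
  have hcircle : MeasurePreserving (fun θ i => (cos (θ i), sin (θ i)))
      (Measure.pi fun _ => ν) (μ.map fun ω i => X i ω) := by
    rw [hindep.map_fun_eq_pi_map fun i => (hmeas i).aemeasurable]
    refine measurePreserving_pi (fun _ => ν) (fun i => μ.map (X i))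
      (f := fun _ θ => (cos θ, sin θ)) fun i => ⟨by fun_prop, ?_⟩
    rw [hlaw i]
    simp only [ν, ProbabilityTheory.cond, Real.volume_Ico, sub_zero]
  calc μ {ω | (0 : ℝ × ℝ) ∈ convexHull ℝ (range fun i => X i ω)}
      = μ.map (fun ω i => X i ω) {y | (0 : ℝ × ℝ) ∈ convexHull ℝ (range y)} :=
        (Measure.map_apply (measurable_pi_lambda _ hmeas) hG).symm
    _ = 1 - (m + 1) * 2⁻¹ ^ m := by
        rw [← hcircle.measure_preimage hG.nullMeasurableSet]
        exact measure_pi_zero_mem_convexHull ν cond_Ico_setOf_sin_sub_pos m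
    _ = ENNReal.ofReal (1 - (m + 1 : ℕ) * ((1 : ℝ) / 2) ^ (m + 1 - 1)) := by
        rw [ENNReal.ofReal_sub _ (by positivity), ENNReal.ofReal_mul (by positivity),
          ENNReal.ofReal_pow (by norm_num), one_div, ENNReal.ofReal_inv_of_pos two_pos,
          ENNReal.ofReal_natCast]
        simp
end

section
/- (Wendel) If X_1, ..., X_n are i.i.d. random points in ℝ^k whose distribution is symmetric with respect to the origin and assigns probability zero to every hyperplane through the origin, then P(0 ∉ conv{X_1, ..., X_n}) = 2^{-(n-1)} · Σ_{j=0}^{k-1} C(n-1, j). -/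
/-!
The points `X i` avoid `0` in their convex hull iff they lie in an open half-space through `0`.
Since the law of `X` is symmetric, flipping the signs of any subset of the points preserves the
joint law, so each of the `2 ^ n` sign patterns `σ` has the same probability that the flipped
points `σ i • X i` lie in an open half-space, i.e. that `σ` is cut out by a hyperplane through
`0`. Hence `2 ^ n` times the probability sought equals the expected number of such patterns.

Almost surely the points are in general position (every `≤ k` of them are linearly independent),
because proper subspaces lie in null hyperplanes. For points in general position the number of
patterns is `2 ∑_{j<k} C(n-1, j)`, by Schläfli's recursion: adding a point `a`, a pattern of the
old points extends in both ways iff it is realized by a hyperplane containing `a`, i.e. by a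
pattern of the projections onto `a^⊥`, and in exactly one way otherwise.
-/

open MeasureTheory ProbabilityTheory RealInnerProductSpace

namespace Wendel

open Finset Filter Topology

variable {E : Type*} [NormedAddCommGroup E] [InnerProductSpace ℝ E] {ι : Type*}

def boolSign (b : Bool) : ℝ := if b then 1 else -1

@[simp] lemma boolSign_true : boolSign true = 1 := rfl

@[simp] lemma boolSign_false : boolSign false = -1 := rfl

@[simp] lemma boolSign_mul_self (b : Bool) : boolSign b * boolSign b = 1 := by
  cases b <;> simp

def InOpenHalfspace (x : ι → E) : Prop := ∃ v : E, ∀ i, 0 < ⟪v, x i⟫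

def IsRealizable (x : ι → E) (σ : ι → Bool) : Prop :=
  InOpenHalfspace fun i => boolSign (σ i) • x i

lemma isRealizable_iff {x : ι → E} {σ : ι → Bool} :
    IsRealizable x σ ↔ ∃ v : E, ∀ i, 0 < boolSign (σ i) * ⟪v, x i⟫ := by
  simp only [IsRealizable, InOpenHalfspace, real_inner_smul_right]

noncomputable def realizableSigns [Fintype ι] [DecidableEq ι] (x : ι → E) :
    Finset (ι → Bool) :=
  open scoped Classical in univ.filter (IsRealizable x)

@[simp] lemma mem_realizableSigns [Fintype ι] [DecidableEq ι] {x : ι → E} {σ : ι → Bool} :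
    σ ∈ realizableSigns x ↔ IsRealizable x σ := by
  simp [realizableSigns]

def GeneralPosition (k : ℕ) (x : ι → E) : Prop :=
  ∀ s : Finset ι, #s ≤ k → LinearIndepOn ℝ x s

lemma GeneralPosition.comp {ι' : Type*} {k : ℕ} {x : ι → E} (hx : GeneralPosition k x)
    {f : ι' → ι} (hf : Function.Injective f) : GeneralPosition k (x ∘ f) := fun s hs => by
  have := hx (s.map ⟨f, hf⟩) (by simpa using hs)
  rw [coe_map] at this
  exact this.comp_of_image hf.injOn

lemma GeneralPosition.ne_zero {k : ℕ} {x : ι → E} (hx : GeneralPosition k x) (hk : k ≠ 0)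
    (i : ι) : x i ≠ 0 :=
  (hx {i} (by simpa [Nat.one_le_iff_ne_zero])).ne_zero (by simp)

lemma isRealizable_orthogonalProjectionOnto_iff (K : Submodule ℝ E) [K.HasOrthogonalProjection]
    {x : ι → E} {σ : ι → Bool} :
    IsRealizable (fun i => K.orthogonalProjectionOnto (x i)) σ ↔
      ∃ v ∈ K, ∀ i, 0 < boolSign (σ i) * ⟪v, x i⟫ := by
  simp only [isRealizable_iff, Submodule.inner_orthogonalProjectionOnto_eq_of_mem_left,
    Subtype.exists, exists_prop]

lemma realizableSigns_eq_empty_of_finrank_eq_zero [FiniteDimensional ℝ E] [Fintype ι]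
    [DecidableEq ι] [Nonempty ι] (hE : Module.finrank ℝ E = 0) (x : ι → E) :
    realizableSigns x = ∅ := by
  refine eq_empty_of_forall_notMem fun σ hσ => ?_
  obtain ⟨v, hv⟩ := mem_realizableSigns.mp hσ
  have : Subsingleton E := Module.finrank_zero_iff.mp hE
  simpa [Subsingleton.elim v 0] using hv (Classical.arbitrary ι)

lemma realizableSigns_eq_univ_of_unique [Fintype ι] [DecidableEq ι] [Unique ι] {x : ι → E}
    (hx : x default ≠ 0) :
    realizableSigns x = univ := by
  refine eq_univ_of_forall fun σ => mem_realizableSigns.mpr <|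
    isRealizable_iff.mpr ⟨boolSign (σ default) • x default, fun i => ?_⟩
  rw [Unique.eq_default i, real_inner_smul_left, ← mul_assoc, boolSign_mul_self, one_mul,
    real_inner_self_eq_norm_sq]
  exact pow_pos (norm_pos_iff.mpr hx) 2

section Cons

variable {n : ℕ} {a : E} {x : Fin n → E} {σ : Fin n → Bool}

lemma isRealizable_cons_iff {b : Bool} :
    IsRealizable (Fin.cons a x : Fin (n + 1) → E) (Fin.cons b σ) ↔
      ∃ v : E, 0 < boolSign b * ⟪v, a⟫ ∧ ∀ i, 0 < boolSign (σ i) * ⟪v, x i⟫ := by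
  simp only [isRealizable_iff, Fin.forall_fin_succ, Fin.cons_zero, Fin.cons_succ]

lemma IsRealizable.of_cons {b : Bool}
    (h : IsRealizable (Fin.cons a x : Fin (n + 1) → E) (Fin.cons b σ)) : IsRealizable x σ :=
  let ⟨v, _, hv⟩ := isRealizable_cons_iff.mp h
  isRealizable_iff.mpr ⟨v, hv⟩

/-- A functional vanishing at `a` can be tilted slightly towards either side of `a`
without changing its strict signs at the finitely many `x i`. -/
lemma isRealizable_cons_of_orthogonal (ha : a ≠ 0)
    (h : ∃ v ∈ (ℝ ∙ a)ᗮ, ∀ i, 0 < boolSign (σ i) * ⟪v, x i⟫) (b : Bool) :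
    IsRealizable (Fin.cons a x : Fin (n + 1) → E) (Fin.cons b σ) := by
  obtain ⟨v, hvK, hv⟩ := h
  have hva : ⟪v, a⟫ = 0 := Submodule.mem_orthogonal_singleton_iff_inner_left.mp hvK
  have hev : ∀ᶠ t in 𝓝 (0 : ℝ), ∀ i,
      0 < boolSign (σ i) * ⟪v + (boolSign b * t) • a, x i⟫ :=
    eventually_all.2 fun i =>
      ((by fun_prop : Continuous fun t : ℝ =>
          boolSign (σ i) * ⟪v + (boolSign b * t) • a, x i⟫).tendsto 0).eventually
        (lt_mem_nhds (by simpa using hv i))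
  obtain ⟨t, ht, htpos⟩ := ((hev.filter_mono nhdsWithin_le_nhds).and
    (self_mem_nhdsWithin : Set.Ioi (0 : ℝ) ∈ 𝓝[>] 0)).exists
  refine isRealizable_cons_iff.mpr ⟨v + (boolSign b * t) • a, ?_, ht⟩
  have hpos : 0 < t * ‖a‖ ^ 2 := mul_pos htpos (pow_pos (norm_pos_iff.mpr ha) 2)
  have hsq : boolSign b * (0 + boolSign b * t * ‖a‖ ^ 2) = t * ‖a‖ ^ 2 := by
    linear_combination t * ‖a‖ ^ 2 * boolSign_mul_self b
  rwa [inner_add_left, real_inner_smul_left, hva, real_inner_self_eq_norm_sq, hsq]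

/-- Functionals positive and negative at `a` combine positively into one vanishing at `a`. -/
lemma exists_orthogonal_of_isRealizable_cons
    (hp : IsRealizable (Fin.cons a x : Fin (n + 1) → E) (Fin.cons true σ))
    (hm : IsRealizable (Fin.cons a x : Fin (n + 1) → E) (Fin.cons false σ)) :
    ∃ v ∈ (ℝ ∙ a)ᗮ, ∀ i, 0 < boolSign (σ i) * ⟪v, x i⟫ := by
  obtain ⟨p, hpa, hp⟩ := isRealizable_cons_iff.mp hp
  obtain ⟨m, hma, hm⟩ := isRealizable_cons_iff.mp hm
  simp only [boolSign_true, boolSign_false, one_mul, neg_mul, neg_pos] at hpa hma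
  refine ⟨(-⟪m, a⟫) • p + ⟪p, a⟫ • m, ?_, fun i => ?_⟩
  · rw [Submodule.mem_orthogonal_singleton_iff_inner_left, inner_add_left,
      real_inner_smul_left, real_inner_smul_left]
    ring
  · rw [inner_add_left, real_inner_smul_left, real_inner_smul_left]
    nlinarith [mul_pos (neg_pos.mpr hma) (hp i), mul_pos hpa (hm i)]

lemma exists_isRealizable_cons (h : IsRealizable x σ)
    (hK : ¬ ∃ v ∈ (ℝ ∙ a)ᗮ, ∀ i, 0 < boolSign (σ i) * ⟪v, x i⟫) :
    ∃ b, IsRealizable (Fin.cons a x : Fin (n + 1) → E) (Fin.cons b σ) := by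
  obtain ⟨v, hv⟩ := isRealizable_iff.mp h
  have hva : ⟪v, a⟫ ≠ 0 := fun hva =>
    hK ⟨v, Submodule.mem_orthogonal_singleton_iff_inner_left.mpr hva, hv⟩
  refine ⟨decide (0 < ⟪v, a⟫), isRealizable_cons_iff.mpr ⟨v, ?_, hv⟩⟩
  rcases hva.lt_or_gt with hneg | hpos
  · simpa [hneg.not_gt] using hneg
  · simp [hpos]

open scoped Classical in
lemma ite_isRealizable_cons_add (ha : a ≠ 0) (σ : Fin n → Bool) :
    ((if IsRealizable (Fin.cons a x : Fin (n + 1) → E) (Fin.cons true σ) then 1 else 0) +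
        (if IsRealizable (Fin.cons a x : Fin (n + 1) → E) (Fin.cons false σ) then 1 else 0) :
        ℕ) =
      (if IsRealizable x σ then 1 else 0) +
        (if ∃ v ∈ (ℝ ∙ a)ᗮ, ∀ i, 0 < boolSign (σ i) * ⟪v, x i⟫ then 1 else 0) := by
  by_cases hK : ∃ v ∈ (ℝ ∙ a)ᗮ, ∀ i, 0 < boolSign (σ i) * ⟪v, x i⟫
  · have hx : IsRealizable x σ := (isRealizable_cons_of_orthogonal ha hK true).of_cons
    simp [isRealizable_cons_of_orthogonal ha hK, hx, hK]
  by_cases hx : IsRealizable x σ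
  · have hboth := mt (fun h : _ ∧ _ => exists_orthogonal_of_isRealizable_cons h.1 h.2) hK
    obtain ⟨b, hb⟩ := exists_isRealizable_cons hx hK
    cases b <;> simp_all
  · simp [hx, hK, mt IsRealizable.of_cons hx]

end Cons

open scoped Classical in
lemma card_realizableSigns_cons {n : ℕ} {a : E} (ha : a ≠ 0) (x : Fin n → E) :
    #(realizableSigns (Fin.cons a x : Fin (n + 1) → E)) =
      #(realizableSigns x) +
        #(realizableSigns fun i => (ℝ ∙ a)ᗮ.orthogonalProjectionOnto (x i)) := by
  simp only [realizableSigns, card_filter, isRealizable_orthogonalProjectionOnto_iff]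
  refine (Fintype.sum_equiv (M := ℕ) (Fin.consEquiv fun _ => Bool) _ _ fun _ => rfl).symm.trans
    ?_
  rw [Fintype.sum_prod_type_right, ← sum_add_distrib]
  refine sum_congr rfl fun σ _ => ?_
  rw [Fintype.sum_bool]
  exact ite_isRealizable_cons_add ha σ

lemma GeneralPosition.orthogonalProjectionOnto_cons {n l : ℕ} {a : E} {x : Fin n → E}
    (h : GeneralPosition (l + 1) (Fin.cons a x : Fin (n + 1) → E)) :
    GeneralPosition l fun i => (ℝ ∙ a)ᗮ.orthogonalProjectionOnto (x i) := by
  intro s hs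
  have hsucc : (0 : Fin (n + 1)) ∉ Fin.succ '' (s : Set (Fin n)) := by simp [Fin.succ_ne_zero]
  have hind := h (insert 0 (s.map (Fin.succEmb n))) ((card_insert_le _ _).trans (by simpa))
  rw [coe_insert, coe_map, Fin.coe_succEmb, linearIndepOn_insert hsucc, Set.image_image] at hind
  simp only [Fin.cons_succ, Fin.cons_zero] at hind
  obtain ⟨hx, ha⟩ := hind
  have hx : LinearIndepOn ℝ x s := by
    simpa [Function.comp_def] using hx.comp_of_image (Fin.succ_injective n).injOn
  have hdisj : Disjoint (Submodule.span ℝ (Set.range fun i : (s : Set (Fin n)) => x i))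
      ((ℝ ∙ a)ᗮ.orthogonalProjectionOnto : E →ₗ[ℝ] (ℝ ∙ a)ᗮ).ker := by
    rw [Submodule.ker_orthogonalProjectionOnto, Submodule.orthogonal_orthogonal,
      ← Set.image_eq_range x s,
      Submodule.disjoint_span_singleton' (by rintro rfl; exact ha (zero_mem _))]
    exact ha
  exact hx.map hdisj

lemma sum_range_choose_succ (n l : ℕ) :
    ∑ j ∈ range (l + 1), (n + 1).choose j =
      ∑ j ∈ range (l + 1), n.choose j + ∑ j ∈ range l, n.choose j := by
  rw [sum_range_succ' (fun j => (n + 1).choose j), sum_range_succ' (fun j => n.choose j)]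
  simp only [Nat.choose_succ_succ, Nat.choose_zero_right, sum_add_distrib]
  ring

theorem card_realizableSigns [FiniteDimensional ℝ E] {n : ℕ} (x : Fin (n + 1) → E)
    (hx : GeneralPosition (Module.finrank ℝ E) x) :
    #(realizableSigns x) = 2 * ∑ j ∈ range (Module.finrank ℝ E), n.choose j := by
  induction n generalizing E with
  | zero =>
    cases hr : Module.finrank ℝ E with
    | zero => simp [realizableSigns_eq_empty_of_finrank_eq_zero hr]
    | succ l =>
      rw [realizableSigns_eq_univ_of_unique (ι := Fin 1) (hx.ne_zero (by omega) _)]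
      simp [sum_range_succ']
  | succ n ih =>
    cases hr : Module.finrank ℝ E with
    | zero => simp [realizableSigns_eq_empty_of_finrank_eq_zero hr]
    | succ l =>
      have : Fact (Module.finrank ℝ E = l + 1) := ⟨hr⟩
      have ha : x 0 ≠ 0 := hx.ne_zero (by omega) 0
      have hx' : GeneralPosition (l + 1) (Fin.cons (x 0) (Fin.tail x) : Fin (n + 2) → E) := by
        rwa [Fin.cons_self_tail, ← hr]
      have hy : GeneralPosition (Module.finrank ℝ (ℝ ∙ x 0)ᗮ)
          fun i => (ℝ ∙ x 0)ᗮ.orthogonalProjectionOnto (Fin.tail x i) := by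
        rw [Submodule.finrank_orthogonal_span_singleton (n := l) ha]
        exact hx'.orthogonalProjectionOnto_cons
      rw [← Fin.cons_self_tail x, card_realizableSigns_cons ha,
        ih (Fin.tail x) (hx.comp (Fin.succ_injective _)), ih _ hy,
        Submodule.finrank_orthogonal_span_singleton (n := l) ha, hr, sum_range_choose_succ]
      ring

lemma isOpen_setOf_inOpenHalfspace [Finite ι] : IsOpen {x : ι → E | InOpenHalfspace x} := by
  have : {x : ι → E | InOpenHalfspace x} =
      ⋃ v : E, ⋂ i, {x : ι → E | 0 < ⟪v, x i⟫} := by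
    ext x
    simp [InOpenHalfspace]
  rw [this]
  exact isOpen_iUnion fun v => isOpen_iInter_of_finite fun i =>
    isOpen_lt continuous_const (by fun_prop)

lemma zero_notMem_convexHull_iff [CompleteSpace E] [Finite ι] {x : ι → E} :
    (0 : E) ∉ convexHull ℝ (Set.range x) ↔ InOpenHalfspace x := by
  constructor
  · intro h0
    obtain ⟨f, u, hfu, hall⟩ := geometric_hahn_banach_point_closed (convex_convexHull ℝ _)
      ((Set.finite_range x).isClosed_convexHull ℝ) h0
    refine ⟨(InnerProductSpace.toDual ℝ E).symm f, fun i => ?_⟩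
    rw [InnerProductSpace.toDual_symm_apply]
    linarith [map_zero f ▸ hfu, hall (x i) (subset_convexHull ℝ _ (Set.mem_range_self i))]
  · rintro ⟨v, hv⟩ h0
    have hsub : convexHull ℝ (Set.range x) ⊆ {z : E | 0 < ⟪v, z⟫} :=
      convexHull_min (Set.range_subset_iff.mpr hv)
        (convex_halfSpace_gt (innerₛₗ ℝ v).isLinear 0)
    simpa using hsub h0

section Probability

variable [MeasurableSpace E] {ν : Measure E}

lemma measurePreserving_boolSign_smul [BorelSpace E] (hsymm : ν.map (fun x => -x) = ν)
    (b : Bool) :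
    MeasurePreserving (fun z : E => boolSign b • z) ν ν := by
  cases b
  · simpa using MeasurePreserving.mk measurable_neg hsymm
  · simp only [boolSign_true, one_smul]
    exact MeasurePreserving.id ν

variable [FiniteDimensional ℝ E]

lemma measure_submodule_eq_zero (hplane : ∀ v : E, v ≠ 0 → ν {x | ⟪v, x⟫ = 0} = 0)
    {W : Submodule ℝ E} (hW : W ≠ ⊤) : ν W = 0 := by
  obtain ⟨v, hvW, hv0⟩ :=
    Submodule.exists_mem_ne_zero_of_ne_bot (Submodule.orthogonal_eq_bot_iff.not.mpr hW)
  exact measure_mono_null (fun z hz => Submodule.inner_right_of_mem_orthogonal hz hvW ▸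
    real_inner_comm z v) (hplane v hv0)

variable [BorelSpace E]

lemma sum_measure_isRealizable [Fintype ι] [DecidableEq ι] (μ : Measure (ι → E)) :
    ∑ σ : ι → Bool, μ {x | IsRealizable x σ} = ∫⁻ x, #(realizableSigns x) ∂μ := by
  have hmeas (σ : ι → Bool) : MeasurableSet {x : ι → E | IsRealizable x σ} :=
    (isOpen_setOf_inOpenHalfspace.preimage (by fun_prop)).measurableSet
  calc ∑ σ : ι → Bool, μ {x | IsRealizable x σ}
      = ∑ σ : ι → Bool, ∫⁻ x, {x | IsRealizable x σ}.indicator 1 x ∂μ := by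
        simp only [lintegral_indicator_one (hmeas _)]
    _ = ∫⁻ x, #(realizableSigns x) ∂μ := by
        rw [← lintegral_finsetSum _ fun σ _ => measurable_one.indicator (hmeas σ)]
        congr 1 with x
        rw [realizableSigns, card_filter, Nat.cast_sum]
        refine sum_congr rfl fun σ _ => ?_
        by_cases h : IsRealizable x σ <;> simp [h]

variable [IsProbabilityMeasure ν]

lemma ae_linearIndependent_fin (hplane : ∀ v : E, v ≠ 0 → ν {x | ⟪v, x⟫ = 0} = 0)
    {m : ℕ} (hm : m ≤ Module.finrank ℝ E) :
    ∀ᵐ y ∂Measure.pi (fun _ : Fin m => ν), LinearIndependent ℝ y := by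
  induction m with
  | zero => exact ae_of_all _ fun y => linearIndependent_empty_type
  | succ m ih =>
    have hsplit := (Measure.measurePreserving_swap).comp
      (measurePreserving_piFinSuccAbove (fun _ : Fin (m + 1) => ν) (Fin.last m))
    have hmeas : MeasurableSet
        {p : (Fin m → E) × E | LinearIndependent ℝ (Fin.snoc p.1 p.2 : Fin (m + 1) → E)} :=
      isOpen_setOfPred_linearIndependent.measurableSet.preimage (by fun_prop)
    have hae : ∀ᵐ p ∂(Measure.pi fun _ : Fin m => ν).prod ν,
        LinearIndependent ℝ (Fin.snoc p.1 p.2 : Fin (m + 1) → E) := by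
      refine (Measure.ae_prod_iff_ae_ae hmeas).mpr ?_
      filter_upwards [ih (by omega)] with y hy
      have hspan : Submodule.span ℝ (Set.range y) ≠ ⊤ := fun htop => by
        have := (finrank_range_le_card (R := ℝ) y).trans_lt (by simpa using hm)
        rw [Set.finrank, htop, finrank_top] at this
        exact this.false
      filter_upwards [measure_eq_zero_iff_ae_notMem.mp (measure_submodule_eq_zero hplane hspan)]
        with z hz
      exact linearIndependent_finSnoc.mpr ⟨hy, hz⟩
    simpa using hsplit.quasiMeasurePreserving.ae hae

lemma ae_linearIndepOn [Fintype ι] (hplane : ∀ v : E, v ≠ 0 → ν {x | ⟪v, x⟫ = 0} = 0)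
    {s : Finset ι} (hs : #s ≤ Module.finrank ℝ E) :
    ∀ᵐ x ∂Measure.pi (fun _ : ι => ν), LinearIndepOn ℝ x s := by
  have hrestrict : (Measure.pi fun _ : ι => ν).map s.restrict = Measure.pi fun _ : s => ν := by
    rw [← Measure.infinitePi_eq_pi, Measure.infinitePi_map_restrict]
  have hreindex := measurePreserving_arrowCongr' (fun _ : s => ν) (fun _ : Fin #s => ν)
    s.equivFin (MeasurableEquiv.refl E) fun _ => MeasurePreserving.id ν
  have hs : ∀ᵐ y ∂Measure.pi (fun _ : s => ν), LinearIndependent ℝ y := by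
    filter_upwards [hreindex.quasiMeasurePreserving.ae (ae_linearIndependent_fin hplane hs)]
      with y hy
    exact (linearIndependent_equiv s.equivFin.symm).mp hy
  exact ae_of_ae_map (measurable_restrict _).aemeasurable (hrestrict ▸ hs)

lemma ae_generalPosition [Fintype ι]
    (hplane : ∀ v : E, v ≠ 0 → ν {x | ⟪v, x⟫ = 0} = 0) :
    ∀ᵐ x ∂Measure.pi (fun _ : ι => ν), GeneralPosition (Module.finrank ℝ E) x := by
  simp only [GeneralPosition, ae_all_iff, eventually_imp_distrib_left]
  exact fun s hs => ae_linearIndepOn hplane hs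

theorem measure_inOpenHalfspace (hsymm : ν.map (fun x => -x) = ν)
    (hplane : ∀ v : E, v ≠ 0 → ν {x | ⟪v, x⟫ = 0} = 0) (n : ℕ) :
    (Measure.pi fun _ : Fin (n + 1) => ν) {x | InOpenHalfspace x} =
      (∑ j ∈ range (Module.finrank ℝ E), n.choose j : ℕ) / 2 ^ n := by
  set π := Measure.pi fun _ : Fin (n + 1) => ν
  have hopen : MeasurableSet {x : Fin (n + 1) → E | InOpenHalfspace x} :=
    isOpen_setOf_inOpenHalfspace.measurableSet
  have hflip (σ : Fin (n + 1) → Bool) :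
      π {x | IsRealizable x σ} = π {x | InOpenHalfspace x} :=
    (measurePreserving_pi _ _ fun i =>
      measurePreserving_boolSign_smul hsymm (σ i)).measure_preimage hopen.nullMeasurableSet
  have hcount : ∫⁻ x, #(realizableSigns x) ∂π =
      2 * (∑ j ∈ range (Module.finrank ℝ E), n.choose j : ℕ) := by
    rw [lintegral_congr_ae ((ae_generalPosition hplane).mono fun x hx => by
      rw [card_realizableSigns x hx])]
    simp
  have hsum : 2 ^ (n + 1) * π {x | InOpenHalfspace x} =
      2 * (∑ j ∈ range (Module.finrank ℝ E), n.choose j : ℕ) := by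
    rw [← hcount, ← sum_measure_isRealizable, sum_congr rfl fun σ _ => hflip σ, sum_const,
      card_univ, Fintype.card_fun, Fintype.card_bool, Fintype.card_fin, nsmul_eq_mul]
    push_cast
    rfl
  rw [ENNReal.eq_div_iff (by simp) (by simp),
    ← ENNReal.mul_right_inj two_ne_zero ENNReal.ofNat_ne_top, ← mul_assoc, ← pow_succ', hsum]

end Probability

end Wendel

theorem stmt12_general {Ω : Type*} [MeasurableSpace Ω] (μ : Measure Ω) [IsProbabilityMeasure μ]
    (k n : ℕ) (hn : k < n)
    (X : Fin n → Ω → EuclideanSpace ℝ (Fin k)) (hmeas : ∀ i, Measurable (X i))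
    (hindep : iIndepFun X μ)
    (ν : Measure (EuclideanSpace ℝ (Fin k)))
    (hlaw : ∀ i, Measure.map (X i) μ = ν)
    (hsymm : Measure.map (fun x => -x) ν = ν)
    (hplane : ∀ v : EuclideanSpace ℝ (Fin k), v ≠ 0 → ν {x | ⟪v, x⟫ = 0} = 0) :
    μ {ω | (0 : EuclideanSpace ℝ (Fin k)) ∉ convexHull ℝ (Set.range fun i => X i ω)} =
      ENNReal.ofReal (((1:ℝ)/2) ^ (n-1) * ∑ j ∈ Finset.range k, ((n-1).choose j : ℝ)) := by
  obtain ⟨m, rfl⟩ : ∃ m, n = m + 1 := ⟨n - 1, by omega⟩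
  have : IsProbabilityMeasure ν :=
    hlaw 0 ▸ Measure.isProbabilityMeasure_map (hmeas 0).aemeasurable
  have hjoint : μ.map (fun ω i => X i ω) = Measure.pi fun _ => ν := by
    rw [(iIndepFun_iff_map_fun_eq_pi_map fun i => (hmeas i).aemeasurable).mp hindep]
    simp_rw [hlaw]
  have hevent :
      {ω | (0 : EuclideanSpace ℝ (Fin k)) ∉ convexHull ℝ (Set.range fun i => X i ω)} =
        (fun ω i => X i ω) ⁻¹' {x | Wendel.InOpenHalfspace x} := by
    ext ω
    exact Wendel.zero_notMem_convexHull_iff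
  rw [hevent,
    ← Measure.map_apply (by fun_prop) Wendel.isOpen_setOf_inOpenHalfspace.measurableSet, hjoint,
    Wendel.measure_inOpenHalfspace hsymm hplane, finrank_euclideanSpace_fin,
    Nat.add_sub_cancel, one_div, inv_pow, ← div_eq_inv_mul,
    ENNReal.ofReal_div_of_pos (by positivity), ← Nat.cast_sum, ENNReal.ofReal_natCast,
    ENNReal.ofReal_pow zero_le_two, ENNReal.ofReal_ofNat]

/-- (Wendel) If `X 1, ..., X n` are i.i.d. random points in `ℝ^k` whose common law is
symmetric with respect to the origin and assigns probability zero to every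
hyperplane through the origin, then
`P(0 ∉ conv{X 1, ..., X n}) = 2^{-(n-1)} ∑_{j=0}^{k-1} C(n-1, j)`. -/
theorem stmt12 {Ω : Type*} [MeasurableSpace Ω] (μ : Measure Ω) [IsProbabilityMeasure μ]
    (k n : ℕ) (hk : 1 ≤ k) (hn : k < n)
    (X : Fin n → Ω → EuclideanSpace ℝ (Fin k)) (hmeas : ∀ i, Measurable (X i))
    (hindep : iIndepFun X μ)
    (ν : Measure (EuclideanSpace ℝ (Fin k)))
    (hlaw : ∀ i, Measure.map (X i) μ = ν)
    (hsymm : Measure.map (fun x => -x) ν = ν)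
    (hplane : ∀ v : EuclideanSpace ℝ (Fin k), v ≠ 0 → ν {x | ⟪v, x⟫ = 0} = 0) :
    μ {ω | (0 : EuclideanSpace ℝ (Fin k)) ∉ convexHull ℝ (Set.range fun i => X i ω)} =
      ENNReal.ofReal (((1:ℝ)/2) ^ (n-1) * ∑ j ∈ Finset.range k, ((n-1).choose j : ℝ)) :=
  stmt12_general μ k n hn X hmeas hindep ν hlaw hsymm hplane
end

section
/- Define b(k, n) = 1 - 2^{-(n-1)} Σ_{j=0}^{k-1} C(n-1, j). For all integers n > k ≥ 1, b(k, n+1) > b(k, n). -/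
lemma aux14 (m k : ℕ) : ∑ j ∈ Finset.range (k+1), (m+1).choose j + m.choose k
    = 2 * ∑ j ∈ Finset.range (k+1), m.choose j := by
  induction k with
  | zero => simp
  | succ k ih =>
    rw [Finset.sum_range_succ, Finset.sum_range_succ (f := fun j => m.choose j),
      Nat.choose_succ_succ']
    omega

/-- Monotonicity of `b(k,n)` in `n`: for `n > k ≥ 1`, `b(k, n+1) > b(k, n)`. -/
theorem stmt14 (k n : ℕ) (hk : 1 ≤ k) (hn : k < n) :
    1 - ((1:ℝ)/2) ^ n * ∑ j ∈ Finset.range k, (n.choose j : ℝ)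
      > 1 - ((1:ℝ)/2) ^ (n-1) * ∑ j ∈ Finset.range k, ((n-1).choose j : ℝ) := by
  obtain ⟨m, rfl⟩ : ∃ m, n = m + 1 := ⟨n - 1, by omega⟩
  obtain ⟨k', rfl⟩ : ∃ k', k = k' + 1 := ⟨k - 1, by omega⟩
  simp only [Nat.add_sub_cancel]
  have hA := aux14 m k'
  have hAc : (∑ j ∈ Finset.range (k'+1), ((m+1).choose j : ℝ)) + (m.choose k' : ℝ)
      = 2 * ∑ j ∈ Finset.range (k'+1), (m.choose j : ℝ) := by
    exact_mod_cast congrArg (Nat.cast : ℕ → ℝ) hA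
  have hc : (0:ℝ) < (m.choose k' : ℝ) := by
    exact_mod_cast Nat.choose_pos (by omega : k' ≤ m)
  have h2 : (0:ℝ) < ((1:ℝ)/2) ^ (m+1) := by positivity
  rw [gt_iff_lt, sub_lt_sub_iff_left]
  have : ((1:ℝ)/2) ^ (m+1) * ∑ j ∈ Finset.range (k'+1), ((m+1).choose j : ℝ)
      = ((1:ℝ)/2) ^ m * ∑ j ∈ Finset.range (k'+1), (m.choose j : ℝ)
        - ((1:ℝ)/2) ^ (m+1) * (m.choose k' : ℝ) := by
    rw [pow_succ]
    linear_combination ((1:ℝ)/2)^m * (1/2) * hAc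
  rw [this]
  nlinarith [mul_pos h2 hc]
end

section
/- If γ ∈ (1, 2) and k_n is a sequence of positive integers with n ≤ γ·k_n, then b(k_n, n) = 1 - 2^{-(n-1)} Σ_{j=0}^{k_n - 1} C(n-1, j) tends to 0 as n → ∞. -/
/-!
Writing `m = n - 1` and `K = k n`, the quantity is the probability that a `B(m, 1/2)` variable
is at least `K`. Chernoff's bound `t ^ K * P(X ≥ K) ≤ E[t ^ X] = ((1 + t) / 2) ^ m` for `t ≥ 1`,
with `t = 2u - 1` and `m ≤ γ K`, gives the bound `(u ^ γ / (2u - 1)) ^ K`. Since `γ < 2`, the map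
`u ↦ 2u - u ^ γ` has derivative `2 - γ > 0` at `u = 1`, so some `u > 1` makes the base `< 1`;
and `K ≥ n / γ → ∞`.
-/

open Filter Finset

lemma exists_one_lt_rpow_lt_two_mul_sub_one {γ : ℝ} (hγ : γ < 2) :
    ∃ u : ℝ, 1 < u ∧ u ^ γ < 2 * u - 1 := by
  have hd : HasDerivAt (fun u : ℝ => 2 * u - u ^ γ) (2 - γ) 1 := by
    simpa using (hasDerivAt_const_mul 2).fun_sub
      (Real.hasDerivAt_rpow_const (x := 1) (p := γ) (Or.inl one_ne_zero))
  obtain ⟨u, hslope, hu⟩ := (((hasDerivAt_iff_tendsto_slope.mp hd).eventually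
    (eventually_gt_nhds (sub_pos.2 hγ))).filter_mono (nhdsGT_le_nhdsNE 1)
    |>.and self_mem_nhdsWithin).exists
  rw [slope_pos_iff hu] at hslope
  exact ⟨u, hu, by simp at hslope; linarith⟩

lemma add_one_pow_eq_sum_range_of_lt {R : Type*} [CommSemiring R] (x : R) {m N : ℕ}
    (h : m < N) : (x + 1) ^ m = ∑ j ∈ range N, x ^ j * m.choose j := by
  simp only [add_pow, one_pow, mul_one]
  refine sum_subset (range_subset_range.2 h) fun j _ hj ↦ ?_
  simp [Nat.choose_eq_zero_of_lt (by simpa using hj : m < j)]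

/-- The probability that a `B(m, 1/2)` variable is at least `K`; `b(K, n)` is
`binomialUpperTail (n - 1) K`. -/
noncomputable def binomialUpperTail (m K : ℕ) : ℝ :=
  1 - (1 / 2) ^ m * ∑ j ∈ range K, (m.choose j : ℝ)

/-- Any upper end `≥ m + 1` works; `K + m + 1` avoids a case split on `K ≤ m + 1`. -/
lemma binomialUpperTail_eq_sum_Ico (m K : ℕ) :
    binomialUpperTail m K = (1 / 2) ^ m * ∑ j ∈ Ico K (K + m + 1), (m.choose j : ℝ) := by
  have h2 := add_one_pow_eq_sum_range_of_lt (1 : ℝ) (show m < K + m + 1 by omega)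
  norm_num at h2
  calc binomialUpperTail m K = (1 / 2) ^ m * (2 ^ m - ∑ j ∈ range K, (m.choose j : ℝ)) := by
        rw [binomialUpperTail, mul_sub, ← mul_pow]; norm_num
    _ = _ := by
        rw [h2, ← sum_range_add_sum_Ico _ (show K ≤ K + m + 1 by omega), add_sub_cancel_left]

lemma binomialUpperTail_nonneg (m K : ℕ) : 0 ≤ binomialUpperTail m K := by
  rw [binomialUpperTail_eq_sum_Ico]
  positivity

lemma pow_mul_binomialUpperTail_le {t : ℝ} (ht : 1 ≤ t) (m K : ℕ) :
    t ^ K * binomialUpperTail m K ≤ ((t + 1) / 2) ^ m := by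
  have hchern : t ^ K * ∑ j ∈ Ico K (K + m + 1), (m.choose j : ℝ) ≤ (t + 1) ^ m := by
    rw [mul_sum, add_one_pow_eq_sum_range_of_lt t (show m < K + m + 1 by omega),
      ← sum_range_add_sum_Ico _ (show K ≤ K + m + 1 by omega)]
    refine le_add_of_nonneg_of_le (by positivity) (sum_le_sum fun j hj ↦ ?_)
    exact mul_le_mul_of_nonneg_right (pow_le_pow_right₀ ht (mem_Ico.1 hj).1) (by positivity)
  calc t ^ K * binomialUpperTail m K
      = (1 / 2) ^ m * (t ^ K * ∑ j ∈ Ico K (K + m + 1), (m.choose j : ℝ)) := by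
        rw [binomialUpperTail_eq_sum_Ico]; ring
    _ ≤ (1 / 2) ^ m * (t + 1) ^ m := by gcongr
    _ = ((t + 1) / 2) ^ m := by rw [← mul_pow, one_div_mul_eq_div]

lemma binomialUpperTail_le {γ u : ℝ} (hu : 1 < u) {m K : ℕ} (hmK : (m : ℝ) ≤ γ * K) :
    binomialUpperTail m K ≤ (u ^ γ / (2 * u - 1)) ^ K := by
  have ht : 0 < (2 * u - 1) ^ K := pow_pos (by linarith) K
  have h := pow_mul_binomialUpperTail_le (t := 2 * u - 1) (by linarith) m K
  rw [show (2 * u - 1 + 1) / 2 = u by ring] at h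
  calc binomialUpperTail m K ≤ u ^ m / (2 * u - 1) ^ K := by
        rw [le_div_iff₀ ht, mul_comm]; exact h
    _ = u ^ (m : ℝ) / (2 * u - 1) ^ K := by rw [Real.rpow_natCast]
    _ ≤ u ^ (γ * K) / (2 * u - 1) ^ K :=
        div_le_div_of_nonneg_right (Real.rpow_le_rpow_of_exponent_le hu.le hmK) ht.le
    _ = (u ^ γ / (2 * u - 1)) ^ K := by
        rw [div_pow, Real.rpow_mul (by linarith), Real.rpow_natCast]

theorem stmt18_general (γ : ℝ) (hγ : γ ∈ Set.Ioo (1:ℝ) 2) (k : ℕ → ℕ)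
    (hk : ∀ n : ℕ, (n : ℝ) ≤ γ * (k n : ℝ)) :
    Filter.Tendsto
      (fun n : ℕ =>
        1 - ((1:ℝ)/2) ^ (n-1) * ∑ j ∈ Finset.range (k n), ((n-1).choose j : ℝ))
      Filter.atTop (nhds 0) := by
  obtain ⟨u, hu, hur⟩ := exists_one_lt_rpow_lt_two_mul_sub_one hγ.2
  have hγ0 : 0 < γ := by linarith [hγ.1]
  have hk_top : Tendsto k atTop atTop := by
    refine tendsto_natCast_atTop_iff.1 (tendsto_atTop_mono (fun n ↦ ?_)
      (tendsto_natCast_atTop_atTop.atTop_div_const hγ0))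
    rw [div_le_iff₀' hγ0]
    exact hk n
  have hr : Tendsto (fun n ↦ (u ^ γ / (2 * u - 1)) ^ k n) atTop (nhds 0) :=
    (tendsto_pow_atTop_nhds_zero_of_lt_one
      (div_nonneg (Real.rpow_nonneg (by linarith) γ) (by linarith))
      ((div_lt_one (by linarith)).2 hur)).comp hk_top
  exact squeeze_zero (fun n ↦ binomialUpperTail_nonneg (n - 1) (k n))
    (fun n ↦ binomialUpperTail_le hu ((Nat.cast_le.2 (Nat.sub_le n 1)).trans (hk n))) hr

/-- If `γ ∈ (1,2)` and `k n` are positive integers with `n ≤ γ·k n`,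
then `b(k n, n) → 0` as `n → ∞`. -/
theorem stmt18 (γ : ℝ) (hγ : γ ∈ Set.Ioo (1:ℝ) 2) (k : ℕ → ℕ)
    (hkpos : ∀ n, 1 ≤ k n) (hk : ∀ n : ℕ, (n : ℝ) ≤ γ * (k n : ℝ)) :
    Filter.Tendsto
      (fun n : ℕ =>
        1 - ((1:ℝ)/2) ^ (n-1) * ∑ j ∈ Finset.range (k n), ((n-1).choose j : ℝ))
      Filter.atTop (nhds 0) :=
  stmt18_general γ hγ k hk
end
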